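/- Let Δ ⊆ ℝ^d be a convex set, let p ∈ Δ with ‖p‖ = 1, let q = t • p ∈ Δ for some t ≥ 1, and let u ∈ Δ with ‖u‖ > 1 be such that the segment from q to u does not intersect the unit sphere (‖(1 − s) q + s u‖ ≠ 1 for all s ∈ [0, 1]). Then p and u lie in the same path-connected component of the set Δ \ {x ∈ ℝ^d : ‖x‖ < 1} (the part of Δ outside the open unit ball). -/
import Mathlib


/-- Membership-oracle connectivity: let `Δ ⊆ ℝ^d` be convex, `p ∈ Δ` with `‖p‖ = 1`,
`q = t • p ∈ Δ` for some `t ≥ 1`, and `u ∈ Δ` with `‖u‖ > 1` such that the segment from `q`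
to `u` does not meet the unit sphere. Then `p` and `u` are joined by a path inside
`Δ \ {x : ‖x‖ < 1}`, i.e. they lie in the same path-connected component of the part of `Δ`
outside the open unit ball. -/
theorem membership_oracle_joinedIn
    {d : ℕ} (Δ : Set (EuclideanSpace ℝ (Fin d))) (hΔ : Convex ℝ Δ)
    (p : EuclideanSpace ℝ (Fin d)) (hpΔ : p ∈ Δ) (hp : ‖p‖ = 1)
    (t : ℝ) (ht : 1 ≤ t)
    (q : EuclideanSpace ℝ (Fin d)) (hq : q = t • p) (hqΔ : q ∈ Δ)
    (u : EuclideanSpace ℝ (Fin d)) (huΔ : u ∈ Δ) (hu : 1 < ‖u‖)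
    (hseg : ∀ s ∈ Set.Icc (0 : ℝ) 1, ‖(1 - s) • q + s • u‖ ≠ 1) :
    JoinedIn (Δ \ {x : EuclideanSpace ℝ (Fin d) | ‖x‖ < 1}) p u := by
  set S := Δ \ {x : EuclideanSpace ℝ (Fin d) | ‖x‖ < 1} with hS
  -- norms on the segment q u are > 1
  have hcont : Continuous fun s : ℝ => ‖(1 - s) • q + s • u‖ := by continuity
  have hgt : ∀ s ∈ Set.Icc (0 : ℝ) 1, 1 < ‖(1 - s) • q + s • u‖ := by
    intro s hs
    by_contra hle
    push_neg at hle
    have hlt : ‖(1 - s) • q + s • u‖ < 1 := lt_of_le_of_ne hle (hseg s hs)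
    have h1 : (1 : ℝ) ∈ Set.Icc (‖(1 - s) • q + s • u‖)
        (‖(1 - (1:ℝ)) • q + (1:ℝ) • u‖) := by
      constructor
      · exact hlt.le
      · simpa using hu.le
    obtain ⟨c, hc, hcval⟩ := intermediate_value_Icc hs.2 (hcont.continuousOn) h1
    exact hseg c ⟨le_trans hs.1 hc.1, hc.2⟩ hcval
  -- segment from p to q stays in S
  have hpq : segment ℝ p q ⊆ S := by
    rintro x ⟨a, b, ha, hb, hab, rfl⟩
    refine ⟨hΔ hpΔ hqΔ ha hb hab, ?_⟩
    simp only [Set.mem_setOf_eq, not_lt]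
    have : a • p + b • q = (a + b * t) • p := by
      rw [hq, smul_smul, ← add_smul]
    rw [this, norm_smul, hp, mul_one]
    have h1 : (1:ℝ) ≤ a + b * t := by nlinarith
    calc (1:ℝ) ≤ a + b * t := h1
      _ ≤ |a + b * t| := le_abs_self _
      _ = ‖a + b * t‖ := rfl
  -- segment from q to u stays in S
  have hqu : segment ℝ q u ⊆ S := by
    intro x hx
    rw [segment_eq_image] at hx
    obtain ⟨s, hs, rfl⟩ := hx
    refine ⟨hΔ hqΔ huΔ (by linarith [hs.2]) hs.1 (by ring), ?_⟩
    simp only [Set.mem_setOf_eq, not_lt]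
    exact (hgt s hs).le
  have j1 : JoinedIn S p q := by
    have := ((convex_segment p q).isPathConnected ⟨p, left_mem_segment ℝ p q⟩).joinedIn
      p (left_mem_segment ℝ p q) q (right_mem_segment ℝ p q)
    exact this.mono hpq
  have j2 : JoinedIn S q u := by
    have := ((convex_segment q u).isPathConnected ⟨q, left_mem_segment ℝ q u⟩).joinedIn
      q (left_mem_segment ℝ q u) u (right_mem_segment ℝ q u)
    exact this.mono hqu
  exact j1.trans j2
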